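/- Let g : (0,2π) → ℝ (or ℂ) be a bounded measurable function with sup |g| = M, and define r(φ) = −(1/2)(1 − e^{iφ}) ∫_π^φ g(ζ)/(1 − cos ζ) dζ for φ ∈ (0,2π). Then |r(φ)| ≤ M for all φ ∈ (0,2π). -/

import Mathlib

/-!
Since `1 - cos ζ > 0` on `(0, 2π)`, the integral is bounded by `M ∫_π^φ dζ / (1 - cos ζ)`, and
`-cot (ζ / 2)` is an antiderivative of `1 / (1 - cos ζ)` vanishing at `π`. Together with
`‖1 - e^{iφ}‖ = 2 sin (φ / 2)` this gives `‖r(φ)‖ ≤ M |cos (φ / 2)| ≤ M`.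
-/

open Real Complex Set

lemma one_sub_cos_eq_two_mul_sin_sq (x : ℝ) : 1 - Real.cos x = 2 * Real.sin (x / 2) ^ 2 := by
  have := Real.cos_two_mul_eq_one_sub (x / 2)
  rw [mul_div_cancel₀ x two_ne_zero] at this
  linarith

lemma sin_half_pos {x : ℝ} (hx : x ∈ Ioo 0 (2 * π)) : 0 < Real.sin (x / 2) :=
  Real.sin_pos_of_pos_of_lt_pi (by linarith [hx.1]) (by linarith [hx.2])

lemma one_sub_cos_pos {x : ℝ} (hx : x ∈ Ioo 0 (2 * π)) : 0 < 1 - Real.cos x := by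
  rw [one_sub_cos_eq_two_mul_sin_sq]
  have := sin_half_pos hx
  positivity

lemma hasDerivAt_neg_cot_half {x : ℝ} (hx : Real.sin (x / 2) ≠ 0) :
    HasDerivAt (fun t ↦ -Real.cot (t / 2)) (1 / (1 - Real.cos x)) x := by
  have hhalf : HasDerivAt (fun t : ℝ ↦ t / 2) (1 / 2) x := by
    simpa using (hasDerivAt_id x).div_const 2
  have hcot := (((Real.hasDerivAt_cos _).comp x hhalf).div
    ((Real.hasDerivAt_sin _).comp x hhalf) hx).neg
  simp only [Function.comp_apply] at hcot
  have hfun : (fun t ↦ -Real.cot (t / 2)) = fun t ↦ -(Real.cos (t / 2) / Real.sin (t / 2)) := by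
    simp only [Real.cot_eq_cos_div_sin]
  rw [hfun]
  refine hcot.congr_deriv ?_
  rw [one_sub_cos_eq_two_mul_sin_sq]
  field_simp
  linear_combination Real.sin_sq_add_cos_sq (x / 2)

lemma pi_mem_Ioo_zero_two_pi : π ∈ Ioo 0 (2 * π) :=
  ⟨pi_pos, by linarith [pi_pos]⟩

lemma uIcc_pi_subset {φ : ℝ} (hφ : φ ∈ Ioo 0 (2 * π)) : uIcc π φ ⊆ Ioo 0 (2 * π) :=
  ordConnected_Ioo.uIcc_subset pi_mem_Ioo_zero_two_pi hφ

lemma continuousOn_one_div_one_sub_cos :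
    ContinuousOn (fun x ↦ 1 / (1 - Real.cos x)) (Ioo 0 (2 * π)) :=
  continuousOn_const.div (by fun_prop) fun _ hx ↦ (one_sub_cos_pos hx).ne'

lemma intervalIntegrable_one_div_one_sub_cos {φ : ℝ} (hφ : φ ∈ Ioo 0 (2 * π)) :
    IntervalIntegrable (fun x ↦ 1 / (1 - Real.cos x)) MeasureTheory.volume π φ :=
  (continuousOn_one_div_one_sub_cos.mono (uIcc_pi_subset hφ)).intervalIntegrable

lemma integral_one_div_one_sub_cos {φ : ℝ} (hφ : φ ∈ Ioo 0 (2 * π)) :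
    ∫ x in π..φ, 1 / (1 - Real.cos x) = -Real.cot (φ / 2) := by
  rw [intervalIntegral.integral_eq_sub_of_hasDerivAt
    (fun x hx ↦ hasDerivAt_neg_cot_half (sin_half_pos (uIcc_pi_subset hφ hx)).ne')
    (intervalIntegrable_one_div_one_sub_cos hφ)]
  simp [Real.cot_eq_cos_div_sin, Real.cos_pi_div_two]

lemma abs_integral_div_one_sub_cos_le {g : ℝ → ℝ} {M : ℝ}
    (hg : ∀ ζ ∈ Ioo 0 (2 * π), |g ζ| ≤ M) {φ : ℝ} (hφ : φ ∈ Ioo 0 (2 * π)) :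
    |∫ ζ in π..φ, g ζ / (1 - Real.cos ζ)| ≤ M * |Real.cot (φ / 2)| := by
  have hM : 0 ≤ M := (abs_nonneg _).trans (hg π pi_mem_Ioo_zero_two_pi)
  calc |∫ ζ in π..φ, g ζ / (1 - Real.cos ζ)|
      ≤ |∫ ζ in π..φ, M * (1 / (1 - Real.cos ζ))| := by
        rw [← Real.norm_eq_abs]
        refine intervalIntegral.norm_integral_le_abs_of_norm_le ?_
          ((intervalIntegrable_one_div_one_sub_cos hφ).const_mul M)
        filter_upwards [MeasureTheory.ae_restrict_mem measurableSet_uIoc] with ζ hζ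
        have hζ' := uIcc_pi_subset hφ (uIoc_subset_uIcc hζ)
        rw [Real.norm_eq_abs, abs_div, abs_of_pos (one_sub_cos_pos hζ'), mul_one_div]
        exact div_le_div_of_nonneg_right (hg ζ hζ') (one_sub_cos_pos hζ').le
    _ = M * |Real.cot (φ / 2)| := by
        rw [intervalIntegral.integral_const_mul, integral_one_div_one_sub_cos hφ, abs_mul,
          abs_of_nonneg hM, abs_neg]

theorem abs_r_le_general (g : ℝ → ℝ) (M : ℝ)
    (hbd : ∀ ζ ∈ Set.Ioo (0:ℝ) (2 * π), |g ζ| ≤ M) :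
    ∀ φ ∈ Set.Ioo (0:ℝ) (2 * π),
      ‖(-(1 / 2) * (1 - Complex.exp (Complex.I * (φ : ℂ))) *
        ((∫ ζ in π..φ, g ζ / (1 - Real.cos ζ) : ℝ) : ℂ))‖ ≤ M := by
  intro φ hφ
  have hM : 0 ≤ M := (abs_nonneg _).trans (hbd π pi_mem_Ioo_zero_two_pi)
  have hsin := sin_half_pos hφ
  rw [norm_mul, norm_mul, norm_sub_rev, Complex.norm_exp_I_mul_ofReal_sub_one, Complex.norm_real,
    Real.norm_eq_abs, Real.norm_eq_abs, abs_of_pos (by positivity : 0 < 2 * Real.sin (φ / 2))]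
  calc ‖(-(1 / 2) : ℂ)‖ * (2 * Real.sin (φ / 2)) * |∫ ζ in π..φ, g ζ / (1 - Real.cos ζ)|
      ≤ 1 / 2 * (2 * Real.sin (φ / 2)) * (M * |Real.cot (φ / 2)|) := by
        rw [show ‖(-(1 / 2) : ℂ)‖ = 1 / 2 by norm_num]
        gcongr
        exact abs_integral_div_one_sub_cos_le hbd hφ
    _ = M * |Real.cos (φ / 2)| := by
        rw [Real.cot_eq_cos_div_sin, abs_div, abs_of_pos hsin]
        field_simp
    _ ≤ M := mul_le_of_le_one_right hM (Real.abs_cos_le_one _)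

/-- For `g` bounded measurable with `|g| ≤ M` on `(0,2π)`, the
function `r(φ) = −(1/2)(1 − e^{iφ}) ∫_π^φ g(ζ)/(1 − cos ζ) dζ` satisfies
`|r(φ)| ≤ M` on `(0,2π)`. -/
theorem abs_r_le (g : ℝ → ℝ) (M : ℝ) (hmeas : Measurable g)
    (hbd : ∀ ζ ∈ Set.Ioo (0:ℝ) (2 * π), |g ζ| ≤ M) :
    ∀ φ ∈ Set.Ioo (0:ℝ) (2 * π),
      ‖(-(1 / 2) * (1 - Complex.exp (Complex.I * (φ : ℂ))) *
        ((∫ ζ in π..φ, g ζ / (1 - Real.cos ζ) : ℝ) : ℂ))‖ ≤ M :=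
  abs_r_le_general g M hbd
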